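/- arXiv:2002.08101 — 3 statements merged into one kernel-verified Lean document; each statement's English description precedes it below -/
import Mathlib

section
/- Let (V, Q) be an FBAS. For every minimal splitting set S of (V, Q) there exist minimal quorums Û₁ and Û₂ of (V, Q) (not necessarily distinct) such that S = Û₁ ∩ Û₂. In particular, if (V, Q) does not enjoy quorum intersection, then the empty set is the unique minimal splitting set and there exist two disjoint minimal quorums. -/
open Finset

variable {α : Type*} [DecidableEq α]

/-- `U` is a quorum of the FBAS `(V, Q)`: a nonempty subset of `V` containing,
for every member `v`, some slice `q ∈ Q v` with `q ⊆ U`. -/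
def IsQuorum (V : Finset α) (Q : α → Finset (Finset α)) (U : Finset α) : Prop :=
  U ⊆ V ∧ U.Nonempty ∧ ∀ v ∈ U, ∃ q ∈ Q v, q ⊆ U

/-- A minimal quorum: a quorum none of whose proper subsets is a quorum. -/
def IsMinimalQuorum (V : Finset α) (Q : α → Finset (Finset α)) (U : Finset α) : Prop :=
  IsQuorum V Q U ∧ ∀ U' ⊂ U, ¬IsQuorum V Q U'

/-- A blocking set: a subset of `V` intersecting every quorum of `(V, Q)`. -/
def IsBlocking (V : Finset α) (Q : α → Finset (Finset α)) (B : Finset α) : Prop :=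
  B ⊆ V ∧ ∀ U, IsQuorum V Q U → (B ∩ U).Nonempty

/-- A minimal blocking set: a blocking set none of whose proper subsets is blocking. -/
def IsMinimalBlocking (V : Finset α) (Q : α → Finset (Finset α)) (B : Finset α) : Prop :=
  IsBlocking V Q B ∧ ∀ B' ⊂ B, ¬IsBlocking V Q B'

/-- A splitting set: a subset of `V` containing the intersection of two distinct quorums. -/
def IsSplitting (V : Finset α) (Q : α → Finset (Finset α)) (S : Finset α) : Prop :=
  S ⊆ V ∧ ∃ U₁ U₂, IsQuorum V Q U₁ ∧ IsQuorum V Q U₂ ∧ U₁ ≠ U₂ ∧ U₁ ∩ U₂ ⊆ S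

/-- A minimal splitting set: a splitting set none of whose proper subsets is splitting. -/
def IsMinimalSplitting (V : Finset α) (Q : α → Finset (Finset α)) (S : Finset α) : Prop :=
  IsSplitting V Q S ∧ ∀ S' ⊂ S, ¬IsSplitting V Q S'

/-- Well-formedness of an FBAS `(V, Q)`: every slice of every node `v ∈ V`
contains `v` and is a subset of `V`. -/
def WellFormed (V : Finset α) (Q : α → Finset (Finset α)) : Prop :=
  ∀ v ∈ V, ∀ q ∈ Q v, v ∈ q ∧ q ⊆ V

/-- `T` is the top tier of `(V, Q)`: the union of all minimal quorums. -/
def IsTopTier (V : Finset α) (Q : α → Finset (Finset α)) (T : Finset α) : Prop :=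
  ∀ v, v ∈ T ↔ ∃ U, IsMinimalQuorum V Q U ∧ v ∈ U

/-- `(V, Q)` enjoys quorum intersection: any two quorums share a node. -/
def QuorumIntersection (V : Finset α) (Q : α → Finset (Finset α)) : Prop :=
  ∀ U₁ U₂, IsQuorum V Q U₁ → IsQuorum V Q U₂ → (U₁ ∩ U₂).Nonempty

/-! Shrinking the two quorums that witness a splitting set `S` to minimal quorums `W₁ ⊆ U₁`,
`W₂ ⊆ U₂` inside them yields a splitting set `W₁ ∩ W₂ ⊆ S`: if both shrink to the same `W`,
then `W` still differs from one of `U₁ ≠ U₂`, and that pair splits at `W`. Minimality of `S`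
forces `S = W₁ ∩ W₂`. Without quorum intersection two disjoint quorums make `∅` splitting,
so `∅` is the only minimal splitting set, and it is an intersection of minimal quorums. -/

omit [DecidableEq α] in
theorem IsQuorum.exists_isMinimalQuorum_subset {V : Finset α} {Q : α → Finset (Finset α)}
    {U : Finset α} (hU : IsQuorum V Q U) : ∃ W ⊆ U, IsMinimalQuorum V Q W := by
  induction U using Finset.strongInduction with
  | _ U ih =>
    by_cases hmin : ∀ U' ⊂ U, ¬IsQuorum V Q U'
    · exact ⟨U, subset_rfl, hU, hmin⟩
    · push Not at hmin
      obtain ⟨U', hU'U, hU'⟩ := hmin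
      obtain ⟨W, hWU', hW⟩ := ih U' hU'U hU'
      exact ⟨W, hWU'.trans hU'U.subset, hW⟩

theorem IsSplitting.exists_isMinimalQuorum_inter_subset {V : Finset α}
    {Q : α → Finset (Finset α)} {S : Finset α} (hS : IsSplitting V Q S) :
    ∃ W₁ W₂, IsMinimalQuorum V Q W₁ ∧ IsMinimalQuorum V Q W₂ ∧
      IsSplitting V Q (W₁ ∩ W₂) ∧ W₁ ∩ W₂ ⊆ S := by
  obtain ⟨-, U₁, U₂, hU₁, hU₂, hne, hsub⟩ := hS
  obtain ⟨W₁, hW₁U₁, hW₁⟩ := hU₁.exists_isMinimalQuorum_subset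
  obtain ⟨W₂, hW₂U₂, hW₂⟩ := hU₂.exists_isMinimalQuorum_subset
  refine ⟨W₁, W₂, hW₁, hW₂, ⟨inter_subset_left.trans hW₁.1.1, ?_⟩,
    (inter_subset_inter hW₁U₁ hW₂U₂).trans hsub⟩
  by_cases hW : W₁ = W₂
  · subst hW
    rw [inter_self]
    obtain ⟨U, hU, hUW⟩ : ∃ U, IsQuorum V Q U ∧ U ≠ W₁ := by
      by_cases h : U₁ = W₁
      · exact ⟨U₂, hU₂, fun h' => hne (h.trans h'.symm)⟩
      · exact ⟨U₁, hU₁, h⟩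
    exact ⟨U, W₁, hU, hW₁.1, hUW, inter_subset_right⟩
  · exact ⟨W₁, W₂, hW₁.1, hW₂.1, hW, subset_rfl⟩

theorem IsMinimalSplitting.eq_of_isSplitting_of_subset {V : Finset α}
    {Q : α → Finset (Finset α)} {S T : Finset α} (hS : IsMinimalSplitting V Q S)
    (hT : IsSplitting V Q T) (hTS : T ⊆ S) : T = S := by
  by_contra hne
  exact hS.2 T (ssubset_of_subset_of_ne hTS hne) hT

theorem IsMinimalSplitting.exists_isMinimalQuorum_eq_inter {V : Finset α}
    {Q : α → Finset (Finset α)} {S : Finset α} (hS : IsMinimalSplitting V Q S) :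
    ∃ W₁ W₂, IsMinimalQuorum V Q W₁ ∧ IsMinimalQuorum V Q W₂ ∧ S = W₁ ∩ W₂ := by
  obtain ⟨W₁, W₂, hW₁, hW₂, hsplit, hsub⟩ := hS.1.exists_isMinimalQuorum_inter_subset
  exact ⟨W₁, W₂, hW₁, hW₂, (hS.eq_of_isSplitting_of_subset hsplit hsub).symm⟩

theorem isSplitting_empty_of_not_quorumIntersection {V : Finset α}
    {Q : α → Finset (Finset α)} (h : ¬QuorumIntersection V Q) : IsSplitting V Q ∅ := by
  simp only [QuorumIntersection, not_forall, not_nonempty_iff_eq_empty] at h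
  obtain ⟨U₁, U₂, hU₁, hU₂, hdisj⟩ := h
  have hne : U₁ ≠ U₂ := by
    rintro rfl
    exact hU₁.2.1.ne_empty (by rwa [inter_self] at hdisj)
  exact ⟨empty_subset V, U₁, U₂, hU₁, hU₂, hne, hdisj.subset⟩

theorem isMinimalSplitting_iff_eq_empty {V : Finset α} {Q : α → Finset (Finset α)}
    (h : IsSplitting V Q ∅) (S : Finset α) : IsMinimalSplitting V Q S ↔ S = ∅ := by
  constructor
  · intro hS
    exact (hS.eq_of_isSplitting_of_subset h (empty_subset S)).symm
  · rintro rfl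
    exact ⟨h, fun S' hS' => absurd hS' (not_ssubset_empty S')⟩

theorem minimal_splitting_sets_from_minimal_quorums_general
    (V : Finset α) (Q : α → Finset (Finset α)) :
    (∀ S, IsMinimalSplitting V Q S →
      ∃ U₁ U₂, IsMinimalQuorum V Q U₁ ∧ IsMinimalQuorum V Q U₂ ∧ S = U₁ ∩ U₂) ∧
    (¬QuorumIntersection V Q →
      (∀ S, IsMinimalSplitting V Q S ↔ S = ∅) ∧
      ∃ U₁ U₂, IsMinimalQuorum V Q U₁ ∧ IsMinimalQuorum V Q U₂ ∧ Disjoint U₁ U₂) := by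
  refine ⟨fun S hS => hS.exists_isMinimalQuorum_eq_inter, fun hQI => ?_⟩
  have hiff := isMinimalSplitting_iff_eq_empty (isSplitting_empty_of_not_quorumIntersection hQI)
  obtain ⟨W₁, W₂, hW₁, hW₂, hempty⟩ := ((hiff ∅).2 rfl).exists_isMinimalQuorum_eq_inter
  exact ⟨hiff, W₁, W₂, hW₁, hW₂, disjoint_iff_inter_eq_empty.2 hempty.symm⟩

/-- every minimal splitting set is the intersection of two (not
necessarily distinct) minimal quorums; and if quorum intersection fails, the
empty set is the unique minimal splitting set and two disjoint minimal quorums exist. -/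
theorem minimal_splitting_sets_from_minimal_quorums
    (V : Finset α) (Q : α → Finset (Finset α)) (hwf : WellFormed V Q) :
    (∀ S, IsMinimalSplitting V Q S →
      ∃ U₁ U₂, IsMinimalQuorum V Q U₁ ∧ IsMinimalQuorum V Q U₂ ∧ S = U₁ ∩ U₂) ∧
    (¬QuorumIntersection V Q →
      (∀ S, IsMinimalSplitting V Q S ↔ S = ∅) ∧
      ∃ U₁ U₂, IsMinimalQuorum V Q U₁ ∧ IsMinimalQuorum V Q U₂ ∧ Disjoint U₁ U₂) :=
  minimal_splitting_sets_from_minimal_quorums_general V Q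
end

section
/- Let (V, Q) be an FBAS with top tier T. Then for every top tier node v ∈ T there exists at least one minimal blocking set B of (V, Q) with v ∈ B. -/
/-! Let `U` be a minimal quorum containing `v`. Every quorum other than `U` leaves `U`, so
`insert v (V \ U)` is blocking; a minimal blocking subset of it must still meet `U`, and the only
node of `U` it can contain is `v`. -/

open Finset

variable {α : Type*} [DecidableEq α]

variable {V : Finset α} {Q : α → Finset (Finset α)}

theorem IsBlocking.exists_minimal_subset {B₀ : Finset α} (hB₀ : IsBlocking V Q B₀) :
    ∃ B ⊆ B₀, IsMinimalBlocking V Q B := by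
  obtain ⟨B, hBB₀, hB⟩ := exists_minimal_le_of_wellFoundedLT (IsBlocking V Q) B₀ hB₀
  exact ⟨B, hBB₀, minimal_iff_forall_lt.1 hB⟩

theorem IsMinimalQuorum.isBlocking_insert_sdiff {U : Finset α} (hU : IsMinimalQuorum V Q U)
    {v : α} (hv : v ∈ U) : IsBlocking V Q (insert v (V \ U)) := by
  refine ⟨insert_subset (hU.1.1 hv) sdiff_subset, fun W hW => ?_⟩
  by_cases hWU : W ⊆ U
  · have hWeq : W = U := by_contra fun hne => hU.2 W (ssubset_of_subset_of_ne hWU hne) hW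
    exact ⟨v, mem_inter.2 ⟨mem_insert_self v _, hWeq ▸ hv⟩⟩
  · obtain ⟨w, hwW, hwU⟩ := not_subset.1 hWU
    exact ⟨w, mem_inter.2 ⟨mem_insert_of_mem (mem_sdiff.2 ⟨hW.1 hwW, hwU⟩), hwW⟩⟩

theorem IsMinimalQuorum.exists_minimalBlocking_mem {U : Finset α} (hU : IsMinimalQuorum V Q U)
    {v : α} (hv : v ∈ U) : ∃ B, IsMinimalBlocking V Q B ∧ v ∈ B := by
  obtain ⟨B, hBsub, hB⟩ := (hU.isBlocking_insert_sdiff hv).exists_minimal_subset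
  obtain ⟨x, hx⟩ := hB.1.2 U hU.1
  rw [mem_inter] at hx
  have hxv : x = v := by
    rcases mem_insert.1 (hBsub hx.1) with h | h
    · exact h
    · exact absurd hx.2 (mem_sdiff.1 h).2
  exact ⟨B, hB, hxv ▸ hx.1⟩

theorem top_tier_node_in_some_minimal_blocking_set_general
    (V : Finset α) (Q : α → Finset (Finset α))
    (T : Finset α) (hT : IsTopTier V Q T) :
    ∀ v ∈ T, ∃ B, IsMinimalBlocking V Q B ∧ v ∈ B := by
  intro v hv
  obtain ⟨U, hU, hvU⟩ := (hT v).1 hv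
  exact hU.exists_minimalBlocking_mem hvU

/-- every top tier node is a member of at least one minimal blocking set. -/
theorem top_tier_node_in_some_minimal_blocking_set
    (V : Finset α) (Q : α → Finset (Finset α)) (hwf : WellFormed V Q)
    (T : Finset α) (hT : IsTopTier V Q T) :
    ∀ v ∈ T, ∃ B, IsMinimalBlocking V Q B ∧ v ∈ B :=
  top_tier_node_in_some_minimal_blocking_set_general V Q T hT
end

section
/- Let (V, Q) be an FBAS whose top tier T is symmetric with non-nested quorum set (T, ∅, t), where 1 ≤ t ≤ |T|; that is, T is the union of all minimal quorums of (V, Q) and for every v ∈ T, Q(v) = {q ⊆ V : v ∈ q and |q ∩ T| ≥ t}. Then the minimal quorums of (V, Q) are exactly the subsets of T of cardinality t. -/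
/-!
Every node of `T` accepts exactly the slices meeting `T` in at least `t` nodes, so a nonempty
subset of `T` is a quorum iff it has at least `t` elements. A quorum inside `T` with more than
`t` nodes thus contains a smaller quorum, any `t` of its nodes, while no proper subset of a
`t`-element set is large enough to be a quorum.
-/

open Finset

variable {α : Type*} [DecidableEq α]

theorem isQuorum_iff_nonempty_and_le_card {V : Finset α} {Q : α → Finset (Finset α)}
    {T U : Finset α} {t : ℕ} (hTV : T ⊆ V)
    (hsym : ∀ v ∈ T, ∀ q : Finset α, q ∈ Q v ↔ (q ⊆ V ∧ v ∈ q ∧ t ≤ (q ∩ T).card))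
    (hUT : U ⊆ T) : IsQuorum V Q U ↔ U.Nonempty ∧ t ≤ U.card := by
  have hUV : U ⊆ V := hUT.trans hTV
  constructor
  · rintro ⟨-, ⟨v, hv⟩, hslice⟩
    obtain ⟨q, hq, hqU⟩ := hslice v hv
    refine ⟨⟨v, hv⟩, ?_⟩
    calc t ≤ (q ∩ T).card := ((hsym v (hUT hv) q).1 hq).2.2
      _ ≤ q.card := card_le_card inter_subset_left
      _ ≤ U.card := card_le_card hqU
  · rintro ⟨hne, ht⟩
    refine ⟨hUV, hne, fun v hv => ⟨U, ?_, Subset.refl U⟩⟩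
    rw [hsym v (hUT hv), inter_eq_left.mpr hUT]
    exact ⟨hUV, hv, ht⟩

theorem symmetric_top_tier_minimal_quorums_general
    (V : Finset α) (Q : α → Finset (Finset α))
    (T : Finset α) (hT : IsTopTier V Q T)
    (t : ℕ) (ht1 : 1 ≤ t)
    (hsym : ∀ v ∈ T, ∀ q : Finset α, q ∈ Q v ↔ (q ⊆ V ∧ v ∈ q ∧ t ≤ (q ∩ T).card)) :
    ∀ U, IsMinimalQuorum V Q U ↔ (U ⊆ T ∧ U.card = t) := by
  have hTV : T ⊆ V := fun v hv => by
    obtain ⟨U, hU, hvU⟩ := (hT v).1 hv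
    exact hU.1.1 hvU
  have hquorum {U : Finset α} (hUT : U ⊆ T) := isQuorum_iff_nonempty_and_le_card hTV hsym hUT
  have hcard_pos {U : Finset α} (hU : U.card = t) : U.Nonempty := card_pos.1 (by omega)
  intro U
  constructor
  · intro hmin
    have hUT : U ⊆ T := fun v hv => (hT v).2 ⟨U, hmin, hv⟩
    obtain ⟨U', hU'U, hU't⟩ := exists_subset_card_eq ((hquorum hUT).1 hmin.1).2
    have hU' : IsQuorum V Q U' :=
      (hquorum (hU'U.trans hUT)).2 ⟨hcard_pos hU't, hU't.ge⟩
    have hU'_eq : U' = U := by_contra fun hne => hmin.2 U' (hU'U.ssubset_of_ne hne) hU'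
    exact ⟨hUT, hU'_eq ▸ hU't⟩
  · rintro ⟨hUT, hUt⟩
    refine ⟨(hquorum hUT).2 ⟨hcard_pos hUt, hUt.ge⟩, fun U' hU'U hU' => ?_⟩
    have ht_le : t ≤ U'.card := ((hquorum (hU'U.subset.trans hUT)).1 hU').2
    have hlt : U'.card < U.card := card_lt_card hU'U
    omega

/-- in an FBAS with a symmetric top tier `T` with non-nested quorum
set `(T, ∅, t)` (with `1 ≤ t ≤ |T|`), the minimal quorums are exactly the subsets
of `T` of cardinality `t`. -/
theorem symmetric_top_tier_minimal_quorums
    (V : Finset α) (Q : α → Finset (Finset α)) (hwf : WellFormed V Q)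
    (T : Finset α) (hT : IsTopTier V Q T)
    (t : ℕ) (ht1 : 1 ≤ t) (ht2 : t ≤ T.card)
    (hsym : ∀ v ∈ T, ∀ q : Finset α, q ∈ Q v ↔ (q ⊆ V ∧ v ∈ q ∧ t ≤ (q ∩ T).card)) :
    ∀ U, IsMinimalQuorum V Q U ↔ (U ⊆ T ∧ U.card = t) :=
  symmetric_top_tier_minimal_quorums_general V Q T hT t ht1 hsym
end
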